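/- Let G be a Frattini-injective pro-p group. If x^α = y^α for x, y ∈ G and a nonzero p-adic integer α, then x = y (unique extraction of roots). -/

import Mathlib

/-
Write `α = u p ^ k` with `u` a `p`-adic unit. Modulo an open normal subgroup, whose index is a
power of `p`, `x ^ α` agrees with `x ^ n` for a natural `n ≡ α`, so `x ^ α = y ^ α` gives
`x ^ p ^ k = y ^ p ^ k` and it suffices to extract `p`-th roots. The Frattini subgroup of the
procyclic group `closure ⟨x⟩` is `closure ⟨x ^ p⟩`, so `x ^ p = y ^ p` forces
`closure ⟨x⟩ = closure ⟨y⟩` by Frattini-injectivity. Then `x` and `y` commute,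
`(x * y⁻¹) ^ p = 1 ^ p`, and the same argument gives `closure ⟨x * y⁻¹⟩ = closure ⟨1⟩ = 1`.
-/

/-- A pro-`p` group: a compact Hausdorff totally disconnected topological group in which
every open normal subgroup has index a power of `p`. -/
def IsProPGroup (p : ℕ) (G : Type*) [Group G] [TopologicalSpace G] [IsTopologicalGroup G] : Prop :=
  CompactSpace G ∧ T2Space G ∧ TotallyDisconnectedSpace G ∧
    ∀ U : Subgroup G, U.Normal → IsOpen (U : Set G) → ∃ n : ℕ, U.index = p ^ n

/-- The Frattini subgroup of a subgroup `H` of `G`, viewed as a subgroup of `G`: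
the intersection of all maximal open subgroups of `H` (taken inside `H`), mapped into `G`. -/
def frattiniOf {G : Type*} [Group G] [TopologicalSpace G] (H : Subgroup G) : Subgroup G :=
  (⨅ M ∈ {M : Subgroup ↥H | IsOpen (M : Set ↥H) ∧ IsCoatom M}, M).map H.subtype

/-- `H` is topologically finitely generated. -/
def TopFG {G : Type*} [Group G] [TopologicalSpace G] [IsTopologicalGroup G] (H : Subgroup G) : Prop :=
  ∃ S : Finset G, (Subgroup.closure (S : Set G)).topologicalClosure = H

/-- The minimal number of topological generators of `H`. -/
noncomputable def genNum {G : Type*} [Group G] [TopologicalSpace G] [IsTopologicalGroup G]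
    (H : Subgroup G) : ℕ :=
  sInf {n | ∃ S : Finset G, S.card = n ∧ (Subgroup.closure (S : Set G)).topologicalClosure = H}

/-- `G` is Frattini-injective: distinct finitely generated closed subgroups have
distinct Frattini subgroups. -/
def FrattiniInjective (G : Type*) [Group G] [TopologicalSpace G] [IsTopologicalGroup G] : Prop :=
  ∀ H K : Subgroup G, IsClosed (H : Set G) → IsClosed (K : Set G) → TopFG H → TopFG K →
    frattiniOf H = frattiniOf K → H = K

/-- `(G, K, H)` is a hierarchical triple: `x ^ p ∈ H` implies `x ∈ K`. -/
def Hierarchical (p : ℕ) {G : Type*} [Group G] (K H : Subgroup G) : Prop :=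
  ∀ x : G, x ^ p ∈ H → x ∈ K

/-- `G` is Frattini-resistant: `(G, H, Φ(H))` is hierarchical for every finitely generated
closed subgroup `H`. -/
def FrattiniResistant (p : ℕ) (G : Type*) [Group G] [TopologicalSpace G] [IsTopologicalGroup G] :
    Prop :=
  ∀ H : Subgroup G, IsClosed (H : Set G) → TopFG H → Hierarchical p H (frattiniOf H)

/-- The closed commutator subgroup of `H`, as a subgroup of the ambient group. -/
def commClosure {G : Type*} [Group G] [TopologicalSpace G] [IsTopologicalGroup G]
    (H : Subgroup G) : Subgroup G :=
  (⁅H, H⁆ : Subgroup G).topologicalClosure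

/-- `y = x ^ α` for a `p`-adic integer `α`: `y` is the limit of `x ^ n` as the natural
number `n` tends to `α` in `ℤ_[p]`. -/
def IsPadicPow (p : ℕ) [Fact p.Prime] {G : Type*} [Group G] [TopologicalSpace G]
    (x : G) (α : ℤ_[p]) (y : G) : Prop :=
  Filter.Tendsto (fun n : ℕ => x ^ n)
    (Filter.comap (fun n : ℕ => (n : ℤ_[p])) (nhds α)) (nhds y)

open Subgroup

section Algebra

variable {H : Type*} [Group H] {M : Subgroup H} {x : H}

theorem Subgroup.mem_of_zpow_mem_of_isCoprime {a b : ℤ} (hab : IsCoprime a b) (ha : x ^ a ∈ M)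
    (hb : x ^ b ∈ M) : x ∈ M := by
  obtain ⟨u, v, huv⟩ := hab
  have hx : x = (x ^ a) ^ u * (x ^ b) ^ v := by
    rw [← zpow_mul, ← zpow_mul, ← zpow_add, mul_comm a, mul_comm b, huv, zpow_one]
  rw [hx]
  exact M.mul_mem (M.zpow_mem ha u) (M.zpow_mem hb v)

theorem Subgroup.pow_mem_of_isCoatom {p e : ℕ} [M.Normal] (hM : IsCoatom M)
    (he : x ^ p ^ e ∈ M) : x ^ p ∈ M := by
  by_contra hxp
  have htop : M ⊔ zpowers (x ^ p) = ⊤ :=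
    hM.2 _ (lt_of_le_of_ne le_sup_left fun h => hxp (h ▸ mem_sup_right (mem_zpowers _)))
  obtain ⟨m, hm, _, ⟨j, rfl⟩, hmj⟩ := mem_sup_of_normal_left.mp (htop ▸ mem_top x)
  have hcop : IsCoprime (1 - p * j) ((p : ℤ) ^ e) :=
    IsCoprime.pow_right ⟨1, j, by ring⟩
  have hm' : x ^ (1 - p * j) = m := by
    rw [eq_mul_inv_of_mul_eq hmj, zpow_sub, zpow_one, zpow_mul, zpow_natCast]
  refine hxp (M.pow_mem (mem_of_zpow_mem_of_isCoprime hcop (hm' ▸ hm) ?_) p)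
  rw [← zpow_natCast] at he
  exact_mod_cast he

theorem Subgroup.isCoatom_of_pow_prime_mem {p : ℕ} (hp : p.Prime) (hx : x ∉ M)
    (hxp : x ^ p ∈ M) (hcover : ∀ h : H, ∃ i : ℕ, ∃ w ∈ M, h = x ^ i * w) : IsCoatom M := by
  refine ⟨fun h => hx (h ▸ mem_top x), fun S hS => ?_⟩
  obtain ⟨g, hgS, hgM⟩ := SetLike.exists_of_lt hS
  obtain ⟨i, w, hw, rfl⟩ := hcover g
  have hxi : x ^ i ∈ S := by
    simpa using S.mul_mem hgS (S.inv_mem (hS.le hw))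
  have hpi : ¬ p ∣ i := by
    rintro ⟨k, rfl⟩
    exact hgM (M.mul_mem (by rw [pow_mul]; exact M.pow_mem hxp k) hw)
  have hxS : x ∈ S := mem_of_zpow_mem_of_isCoprime (a := i) (b := p)
    (Nat.isCoprime_iff_coprime.mpr (Nat.coprime_comm.mp (hp.coprime_iff_not_dvd.mpr hpi)))
    (by simpa using hxi) (by simpa using hS.le hxp)
  refine eq_top_iff.mpr fun h _ => ?_
  obtain ⟨i', w', hw', rfl⟩ := hcover h
  exact S.mul_mem (S.pow_mem hxS i') (hS.le hw')

end Algebra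

section Procyclic

open Pointwise

variable {G : Type*} [Group G] [TopologicalSpace G] [IsTopologicalGroup G]

theorem exists_pow_mul_of_mem_topologicalClosure_zpowers {x g : G} {n : ℕ} (hn : 0 < n)
    (hg : g ∈ (zpowers x).topologicalClosure) :
    ∃ i < n, ∃ w ∈ (zpowers (x ^ n)).topologicalClosure, g = x ^ i * w := by
  set P := (zpowers (x ^ n)).topologicalClosure
  have hcover : (zpowers x : Set G) ⊆ ⋃ i : Fin n, x ^ (i : ℕ) • (P : Set G) := by
    rintro _ ⟨j, rfl⟩
    have hn' : (0 : ℤ) < n := by exact_mod_cast hn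
    have hj := Int.emod_lt_of_pos j hn'
    refine Set.mem_iUnion.mpr ⟨⟨(j % n).toNat, by omega⟩, ?_⟩
    refine Set.mem_smul_set.mpr
      ⟨(x ^ n) ^ (j / n), le_topologicalClosure _ (zpow_mem_zpowers _ _), ?_⟩
    dsimp only
    rw [smul_eq_mul, ← zpow_natCast, Int.toNat_of_nonneg (Int.emod_nonneg j hn'.ne'),
      ← zpow_natCast, ← zpow_mul, ← zpow_add, Int.emod_add_mul_ediv]
  have hclosed : IsClosed (⋃ i : Fin n, x ^ (i : ℕ) • (P : Set G)) :=
    isClosed_iUnion_of_finite fun i => (isClosed_topologicalClosure _).smul _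
  rw [← SetLike.mem_coe, topologicalClosure_coe] at hg
  obtain ⟨i, w, hw, rfl⟩ := Set.mem_iUnion.mp (closure_minimal hcover hclosed hg)
  exact ⟨i, i.2, w, hw, rfl⟩

theorem topologicalClosure_le_map_subtype {X : Subgroup G} (hX : IsClosed (X : Set G))
    {M : Subgroup X} (hM : IsClosed (M : Set X)) {K : Subgroup G} (hK : K ≤ M.map X.subtype) :
    K.topologicalClosure ≤ M.map X.subtype :=
  topologicalClosure_minimal K hK (hX.isClosedEmbedding_subtypeVal.isClosedMap _ hM)

open scoped IsMulCommutative in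
instance [T2Space G] (x : G) : IsMulCommutative (zpowers x).topologicalClosure :=
  ⟨⟨((zpowers x).commGroupTopologicalClosure mul_comm).mul_comm⟩⟩

theorem topologicalClosure_zpowers_pow_le (x : G) (n : ℕ) :
    (zpowers (x ^ n)).topologicalClosure ≤ (zpowers x).topologicalClosure :=
  topologicalClosure_mono (zpowers_le.mpr (pow_mem (mem_zpowers x) n))

theorem topFG_topologicalClosure_zpowers (x : G) : TopFG (zpowers x).topologicalClosure :=
  ⟨{x}, by rw [Finset.coe_singleton, zpowers_eq_closure]⟩

theorem isOpen_subgroupOf_topologicalClosure_zpowers_pow (x : G) {n : ℕ} (hn : 0 < n) :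
    IsOpen ((zpowers (x ^ n)).topologicalClosure.subgroupOf (zpowers x).topologicalClosure :
      Set (zpowers x).topologicalClosure) := by
  set X := (zpowers x).topologicalClosure
  set PX := (zpowers (x ^ n)).topologicalClosure.subgroupOf X
  let xt : X := ⟨x, le_topologicalClosure _ (mem_zpowers x)⟩
  have hsurj :
      Function.Surjective fun i : Fin n => (QuotientGroup.mk (xt ^ (i : ℕ)) : X ⧸ PX) := by
    rintro ⟨g⟩
    obtain ⟨i, hi, w, hw, hgw⟩ := exists_pow_mul_of_mem_topologicalClosure_zpowers hn g.2
    refine ⟨⟨i, hi⟩, QuotientGroup.eq.mpr ?_⟩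
    simpa [PX, xt, mem_subgroupOf, hgw] using hw
  have : Finite (X ⧸ PX) := Finite.of_surjective _ hsurj
  have : PX.FiniteIndex := finiteIndex_of_finite_quotient
  exact PX.isOpen_of_isClosed_of_finiteIndex
    ((isClosed_topologicalClosure _).preimage continuous_subtype_val)

theorem isCoatom_subgroupOf_topologicalClosure_zpowers_pow {x : G} {p : ℕ} (hp : p.Prime)
    (hx : x ∉ (zpowers (x ^ p)).topologicalClosure) :
    IsCoatom ((zpowers (x ^ p)).topologicalClosure.subgroupOf (zpowers x).topologicalClosure) := by
  refine isCoatom_of_pow_prime_mem (x := ⟨x, le_topologicalClosure _ (mem_zpowers x)⟩) hp hx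
    (mem_subgroupOf.mpr (le_topologicalClosure _ (mem_zpowers _))) fun g => ?_
  obtain ⟨i, -, w, hw, hgw⟩ := exists_pow_mul_of_mem_topologicalClosure_zpowers hp.pos g.2
  exact ⟨i, ⟨w, topologicalClosure_zpowers_pow_le x p hw⟩, mem_subgroupOf.mpr hw,
    Subtype.ext hgw⟩

end Procyclic

open PadicInt in
theorem IsPadicPow.exists_pow_mem {p : ℕ} [Fact p.Prime] {G : Type*} [Group G]
    [TopologicalSpace G] {x z : G} {α : ℤ_[p]} (hx : IsPadicPow p x α z) {W : Set G}
    (hW : W ∈ nhds z) (e : ℕ) :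
    ∃ n : ℕ, x ^ n ∈ W ∧ (n : ZMod (p ^ e)) = toZModPow e α := by
  have hα : {t : ℤ_[p] | toZModPow e t = toZModPow e α} ∈ nhds α := by
    have hp : (0 : ℝ) < p := by exact_mod_cast (Fact.out : p.Prime).pos
    filter_upwards [Metric.closedBall_mem_nhds α (zpow_pos hp (-e : ℤ))] with t ht
    rw [← sub_eq_zero, ← map_sub, ← RingHom.mem_ker, ker_toZModPow,
      ← norm_le_pow_iff_mem_span_pow, ← dist_eq_norm]
    exact ht
  obtain ⟨t, ht, hts⟩ :=
    Filter.mem_comap.mp (Filter.inter_mem (hx hW) (Filter.preimage_mem_comap hα))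
  obtain ⟨n, hn⟩ := denseRange_natCast.mem_nhds ht
  obtain ⟨hxn, hnα⟩ := hts hn
  exact ⟨n, hxn, by simpa using hnα⟩

namespace IsProPGroup

variable {p : ℕ} {G : Type*} [Group G] [TopologicalSpace G] [IsTopologicalGroup G]

theorem exists_openNormal_subset (hG : IsProPGroup p G) {W : Set G} (hW : IsOpen W)
    (h1 : (1 : G) ∈ W) :
    ∃ U : Subgroup G, U.Normal ∧ IsOpen (U : Set G) ∧ (U : Set G) ⊆ W := by
  obtain ⟨_, _, _, -⟩ := hG
  obtain ⟨V, hV, h1V, hVW⟩ := compact_exists_isClopen_in_isOpen hW h1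
  obtain ⟨U, hU⟩ := IsTopologicalGroup.exist_openNormalSubgroup_sub_clopen_nhds_of_one hV h1V
  exact ⟨U, U.isNormal', U.isOpen, hU.trans hVW⟩

theorem exists_forall_pow_mem (hG : IsProPGroup p G) {U : Subgroup G} (hUn : U.Normal)
    (hUo : IsOpen (U : Set G)) : ∃ e : ℕ, ∀ g : G, g ^ p ^ e ∈ U := by
  obtain ⟨e, he⟩ := hG.2.2.2 U hUn hUo
  exact ⟨e, fun g => he ▸ U.pow_index_mem g⟩

theorem eq_of_forall_mk_eq (hG : IsProPGroup p G) {a b : G}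
    (h : ∀ U : Subgroup G, U.Normal → IsOpen (U : Set G) → (a : G ⧸ U) = b) : a = b := by
  have : T2Space G := hG.2.1
  by_contra hab
  obtain ⟨U, hUn, hUo, hU⟩ :=
    hG.exists_openNormal_subset (isOpen_compl_singleton (x := a⁻¹ * b))
      (by simpa [eq_comm, inv_mul_eq_one] using hab)
  exact hU (QuotientGroup.eq.mp (h U hUn hUo)) rfl

theorem subgroupOf_le_of_isCoatom (hG : IsProPGroup p G) (x : G)
    {M : Subgroup (zpowers x).topologicalClosure}
    (hMo : IsOpen (M : Set (zpowers x).topologicalClosure)) (hM : IsCoatom M) :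
    (zpowers (x ^ p)).topologicalClosure.subgroupOf (zpowers x).topologicalClosure ≤ M := by
  have : T2Space G := hG.2.1
  let xt : (zpowers x).topologicalClosure := ⟨x, le_topologicalClosure _ (mem_zpowers x)⟩
  obtain ⟨W, hWo, hWM⟩ := isOpen_induced_iff.mp hMo
  have hW1 : (1 : G) ∈ W := by
    simpa using (hWM ▸ M.one_mem : (1 : (zpowers x).topologicalClosure) ∈ Subtype.val ⁻¹' W)
  obtain ⟨U, hUn, hUo, hUW⟩ := hG.exists_openNormal_subset hWo hW1
  obtain ⟨e, he⟩ := hG.exists_forall_pow_mem hUn hUo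
  have hxe : xt ^ p ^ e ∈ M := by
    rw [← SetLike.mem_coe, ← hWM]
    exact hUW (he x)
  have hPM := topologicalClosure_le_map_subtype (isClosed_topologicalClosure _)
    (M.isClosed_of_isOpen hMo) (K := zpowers (x ^ p))
    (zpowers_le.mpr ⟨xt ^ p, pow_mem_of_isCoatom hM hxe, rfl⟩)
  intro g hg
  obtain ⟨g', hg', hgg⟩ := hPM (mem_subgroupOf.mp hg)
  rwa [Subtype.ext hgg] at hg'

variable [Fact p.Prime]

theorem frattiniOf_topologicalClosure_zpowers (hG : IsProPGroup p G) (x : G) :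
    frattiniOf (zpowers x).topologicalClosure = (zpowers (x ^ p)).topologicalClosure := by
  set X := (zpowers x).topologicalClosure
  set P := (zpowers (x ^ p)).topologicalClosure
  suffices h : ⨅ M ∈ {M : Subgroup X | IsOpen (M : Set X) ∧ IsCoatom M}, M = P.subgroupOf X by
    rw [frattiniOf, h, subgroupOf_map_subtype,
      inf_eq_left.mpr (topologicalClosure_zpowers_pow_le x p)]
  refine le_antisymm ?_ (le_iInf₂ fun M hM => hG.subgroupOf_le_of_isCoatom x hM.1 hM.2)
  by_cases hxP : x ∈ P
  · rw [subgroupOf_eq_top.mpr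
      (topologicalClosure_minimal _ (zpowers_le.mpr hxP) (isClosed_topologicalClosure _))]
    exact le_top
  · exact iInf₂_le _
      ⟨isOpen_subgroupOf_topologicalClosure_zpowers_pow x (Fact.out : p.Prime).pos,
        isCoatom_subgroupOf_topologicalClosure_zpowers_pow Fact.out hxP⟩

theorem topologicalClosure_zpowers_eq_of_pow_eq (hG : IsProPGroup p G) (hFI : FrattiniInjective G)
    {x y : G} (h : x ^ p = y ^ p) :
    (zpowers x).topologicalClosure = (zpowers y).topologicalClosure :=
  hFI _ _ (isClosed_topologicalClosure _) (isClosed_topologicalClosure _)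
    (topFG_topologicalClosure_zpowers x) (topFG_topologicalClosure_zpowers y)
    (by rw [hG.frattiniOf_topologicalClosure_zpowers, hG.frattiniOf_topologicalClosure_zpowers, h])

theorem eq_of_pow_eq (hG : IsProPGroup p G) (hFI : FrattiniInjective G) {x y : G}
    (h : x ^ p = y ^ p) : x = y := by
  have : T2Space G := hG.2.1
  have hy : y ∈ (zpowers x).topologicalClosure :=
    hG.topologicalClosure_zpowers_eq_of_pow_eq hFI h ▸ le_topologicalClosure _ (mem_zpowers y)
  have hxy : Commute x y := setLike_mul_comm (le_topologicalClosure _ (mem_zpowers x)) hy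
  have hpow : (x * y⁻¹) ^ p = 1 ^ p := by
    rw [hxy.inv_right.mul_pow, h, inv_pow, mul_inv_cancel, one_pow]
  have hmem : x * y⁻¹ ∈ (zpowers (1 : G)).topologicalClosure :=
    hG.topologicalClosure_zpowers_eq_of_pow_eq hFI hpow ▸ le_topologicalClosure _ (mem_zpowers _)
  rw [zpowers_one_eq_bot, ← SetLike.mem_coe, coe_topologicalClosure_bot,
    closure_singleton] at hmem
  exact mul_inv_eq_one.mp hmem

theorem eq_of_pow_prime_pow_eq (hG : IsProPGroup p G) (hFI : FrattiniInjective G) (k : ℕ)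
    {x y : G} (h : x ^ p ^ k = y ^ p ^ k) : x = y := by
  induction k generalizing x y with
  | zero => simpa using h
  | succ k ih => exact hG.eq_of_pow_eq hFI (ih (by rwa [← pow_mul, ← pow_mul, ← pow_succ']))

open Pointwise PadicInt in
theorem pow_eq_of_isPadicPow (hG : IsProPGroup p G) {x y z : G} {α : ℤ_[p]} (hα : α ≠ 0)
    (hx : IsPadicPow p x α z) (hy : IsPadicPow p y α z) :
    x ^ p ^ α.valuation = y ^ p ^ α.valuation := by
  refine hG.eq_of_forall_mk_eq fun U hUn hUo => ?_
  obtain ⟨e, he⟩ := hG.exists_forall_pow_mem hUn hUo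
  have hunit : α * ((unitCoeff hα)⁻¹ : ℤ_[p]ˣ) = (p : ℤ_[p]) ^ α.valuation := by
    rw [Units.mul_inv_eq_iff_eq_mul, mul_comm]
    exact unitCoeff_spec hα
  set m := (toZModPow e (((unitCoeff hα)⁻¹ : ℤ_[p]ˣ) : ℤ_[p])).val
  suffices key : ∀ g : G, IsPadicPow p g α z →
      ((g ^ p ^ α.valuation : G) : G ⧸ U) = (z : G ⧸ U) ^ m by
    rw [key x hx, key y hy]
  intro g hg
  obtain ⟨n, hn, hnα⟩ :=
    hg.exists_pow_mem ((hUo.smul z).mem_nhds ⟨1, U.one_mem, mul_one z⟩) e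
  have hmod : n * m ≡ p ^ α.valuation [MOD p ^ e] := by
    rw [← ZMod.natCast_eq_natCast_iff]
    push_cast
    rw [hnα, ZMod.natCast_zmod_val, ← map_mul, hunit, map_pow, map_natCast]
  have hU : (g : G ⧸ U) ^ p ^ e = 1 := by
    rw [← QuotientGroup.mk_pow, QuotientGroup.eq_one_iff]
    exact he g
  calc ((g ^ p ^ α.valuation : G) : G ⧸ U) = (g : G ⧸ U) ^ (n * m) := by
        rw [QuotientGroup.mk_pow, pow_eq_pow_of_modEq hmod.symm hU]
    _ = (z : G ⧸ U) ^ m := by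
        rw [pow_mul, ← QuotientGroup.mk_pow, QuotientGroup.eq.mpr (mem_leftCoset_iff z |>.mp hn)]

end IsProPGroup

/-- A Frattini-injective pro-`p` group has unique extraction of roots:
`x ^ α = y ^ α` for a nonzero `p`-adic integer `α` implies `x = y`. -/
theorem stmt_5 {p : ℕ} [Fact p.Prime] (G : Type*) [Group G] [TopologicalSpace G]
    [IsTopologicalGroup G] (hG : IsProPGroup p G) (hFI : FrattiniInjective G)
    (x y z : G) (α : ℤ_[p]) (hα : α ≠ 0)
    (hx : IsPadicPow p x α z) (hy : IsPadicPow p y α z) : x = y :=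
  hG.eq_of_pow_prime_pow_eq hFI _ (hG.pow_eq_of_isPadicPow hα hx hy)
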